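/- For any ρ ∈ ℂⁿ with Re ρ ≠ 0, the multiplier m_ρ(ξ) = -|ξ|² + 2iρ·ξ satisfies: ξ ↦ 1/m_ρ(ξ) is integrable on every compact subset of ℝⁿ (n ≥ 3). -/

import Mathlib

/-!
Write `ρ = a + ib` with `a, b ∈ ℝⁿ`. Then `m_ρ(ξ) = (|b|² - |ξ + b|²) + 2i⟪a, ξ⟫`, so `|m_ρ(ξ)| < t`
confines `ξ` to the slab `|⟪a, ξ⟫| < t/2` intersected with a spherical shell of width `t` around
`-b`. Slicing along `a`, every slice of the shell is a shell in `ℝⁿ⁻¹` whose volume is `O(t)` as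
long as `n - 1 ≥ 2`, so `|{|m_ρ| < t}| = O(t²)`. By the layer-cake formula a function whose
sublevel sets have measure `O(t^p)` with `p > 1` has an inverse integrable on sets of finite measure.
-/

open MeasureTheory Metric Module Set Complex
open scoped RealInnerProductSpace

lemma pow_sub_pow_le_mul_sq_sub_sq {d : ℕ} (hd : 2 ≤ d) {r R : ℝ} (hr : 0 ≤ r) (hrR : r ≤ R) :
    R ^ d - r ^ d ≤ d * R ^ (d - 2) * (R ^ 2 - r ^ 2) := by
  have hR : 0 ≤ R := hr.trans hrR
  have hmvt : R ^ d - r ^ d ≤ (R - r) * d * R ^ (d - 1) := by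
    simpa [abs_of_nonneg hr, abs_of_nonneg hR, abs_of_nonneg (sub_nonneg.2 hrR), hrR] using
      (le_abs_self _).trans (abs_pow_sub_pow_le R r d)
  obtain ⟨j, rfl⟩ : ∃ j, d = j + 2 := ⟨d - 2, by omega⟩
  calc R ^ (j + 2) - r ^ (j + 2) ≤ (R - r) * (j + 2 : ℕ) * R ^ (j + 1) := hmvt
    _ ≤ (j + 2 : ℕ) * R ^ j * (R ^ 2 - r ^ 2) := by
      rw [pow_succ]
      nlinarith [mul_nonneg (mul_nonneg (Nat.cast_nonneg (α := ℝ) (j + 2)) (pow_nonneg hR j))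
        (mul_nonneg (sub_nonneg.2 hrR) hr)]
    _ = _ := by simp

section Shell

variable {F : Type*} [NormedAddCommGroup F] [NormedSpace ℝ F] [FiniteDimensional ℝ F]
  [MeasurableSpace F] [BorelSpace F] (μ : Measure F) [μ.IsAddHaarMeasure]

lemma addHaar_shell_le (hF : 2 ≤ finrank ℝ F) (c : F) {α β R : ℝ} (hβR : β ≤ R) :
    μ {y | α < ‖y - c‖ ^ 2 ∧ ‖y - c‖ ^ 2 < β} ≤
      ENNReal.ofReal (finrank ℝ F * √R ^ (finrank ℝ F - 2) * (β - α)) * μ (ball 0 1) := by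
  have : Nontrivial F := nontrivial_of_finrank_pos (R := ℝ) (by omega)
  set d := finrank ℝ F
  rcases le_or_gt β α with hβα | hαβ
  · have : {y | α < ‖y - c‖ ^ 2 ∧ ‖y - c‖ ^ 2 < β} = ∅ :=
      eq_empty_of_forall_notMem fun y hy => by linarith [hy.1, hy.2]
    simp [this]
  -- `√α = 0` when `α < 0`, so the inner ball is then empty
  have hsub : {y | α < ‖y - c‖ ^ 2 ∧ ‖y - c‖ ^ 2 < β} ⊆ ball c √β \ ball c √α := by
    rintro y ⟨hαy, hyβ⟩
    rw [mem_sdiff, mem_ball, mem_ball, dist_eq_norm, Real.lt_sqrt (norm_nonneg _), not_lt]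
    exact ⟨hyβ, (Real.sqrt_le_sqrt hαy.le).trans_eq (Real.sqrt_sq (norm_nonneg _))⟩
  have hsqrt : √α ≤ √β := Real.sqrt_le_sqrt hαβ.le
  have hgap : √β ^ d - √α ^ d ≤ d * √R ^ (d - 2) * (β - α) :=
    calc √β ^ d - √α ^ d ≤ d * √β ^ (d - 2) * (√β ^ 2 - √α ^ 2) :=
          pow_sub_pow_le_mul_sq_sub_sq hF (Real.sqrt_nonneg α) hsqrt
      _ ≤ d * √R ^ (d - 2) * (β - α) := by
          have hmax : max β 0 - max α 0 ≤ β - α := by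
            simp only [max_def]; split_ifs <;> linarith
          rw [Real.sq_sqrt', Real.sq_sqrt']
          gcongr
          exact sub_nonneg.2 (max_le_max hαβ.le le_rfl)
  calc μ {y | α < ‖y - c‖ ^ 2 ∧ ‖y - c‖ ^ 2 < β} ≤ μ (ball c √β \ ball c √α) := measure_mono hsub
    _ = μ (ball c √β) - μ (ball c √α) :=
        measure_sdiff (ball_subset_ball hsqrt) measurableSet_ball.nullMeasurableSet
          measure_ball_lt_top.ne
    _ = ENNReal.ofReal (√β ^ d - √α ^ d) * μ (ball 0 1) := by
        rw [Measure.addHaar_ball _ _ (Real.sqrt_nonneg _),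
          Measure.addHaar_ball _ _ (Real.sqrt_nonneg _),
          ← ENNReal.sub_mul fun _ _ => measure_ball_lt_top.ne,
          ENNReal.ofReal_sub _ (by positivity)]
    _ ≤ _ := by gcongr

lemma volume_prod_slab_shell_le (hF : 2 ≤ finrank ℝ F) (c₁ : ℝ) (c₂ : F) {s δ ε R : ℝ}
    (hR : s + ε ≤ R) :
    (volume.prod μ) {p : ℝ × F | |p.1| < δ ∧ |(p.1 - c₁) ^ 2 + ‖p.2 - c₂‖ ^ 2 - s| < ε} ≤
      ENNReal.ofReal (2 * δ) *
        (ENNReal.ofReal (finrank ℝ F * √R ^ (finrank ℝ F - 2) * (2 * ε)) * μ (ball 0 1)) := by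
  set S := {p : ℝ × F | |p.1| < δ ∧ |(p.1 - c₁) ^ 2 + ‖p.2 - c₂‖ ^ 2 - s| < ε}
  set V := ENNReal.ofReal (finrank ℝ F * √R ^ (finrank ℝ F - 2) * (2 * ε)) * μ (ball 0 1)
  have hS : MeasurableSet S := by
    simp only [S, ofPred_and]
    exact (isOpen_lt (by fun_prop) continuous_const).measurableSet.inter
      (isOpen_lt (by fun_prop) continuous_const).measurableSet
  have hfiber (t : ℝ) : μ (Prod.mk t ⁻¹' S) ≤ (ball (0 : ℝ) δ).indicator (fun _ => V) t := by
    by_cases ht : |t| < δ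
    · rw [indicator_of_mem (by simpa [Real.dist_eq] using ht)]
      have hshell : Prod.mk t ⁻¹' S ⊆
          {y | s - (t - c₁) ^ 2 - ε < ‖y - c₂‖ ^ 2 ∧ ‖y - c₂‖ ^ 2 < s - (t - c₁) ^ 2 + ε} :=
        fun y hy => by
          have := abs_lt.1 hy.2
          constructor <;> linarith
      refine (measure_mono hshell).trans ((addHaar_shell_le μ hF c₂ (R := R) ?_).trans_eq ?_)
      · nlinarith [sq_nonneg (t - c₁)]
      · rw [show s - (t - c₁) ^ 2 + ε - (s - (t - c₁) ^ 2 - ε) = 2 * ε by ring]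
    · rw [indicator_of_notMem (by simpa [Real.dist_eq] using ht)]
      exact (measure_mono fun y hy => ht hy.1).trans_eq measure_empty
  calc (volume.prod μ) S = ∫⁻ t, μ (Prod.mk t ⁻¹' S) := Measure.prod_apply hS
    _ ≤ ∫⁻ t, (ball (0 : ℝ) δ).indicator (fun _ => V) t := lintegral_mono hfiber
    _ = ENNReal.ofReal (2 * δ) * V := by
        rw [lintegral_indicator_const measurableSet_ball, Real.volume_ball, mul_comm]

end Shell

section Isometry

variable {V V' : Type*} [NormedAddCommGroup V] [InnerProductSpace ℝ V] [FiniteDimensional ℝ V]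
  [NormedAddCommGroup V'] [InnerProductSpace ℝ V'] [FiniteDimensional ℝ V']

lemma exists_orthonormalBasis_apply_zero {d : ℕ} (hV : finrank ℝ V = d + 1) {v : V}
    (hv : ‖v‖ = 1) : ∃ B : OrthonormalBasis (Fin (d + 1)) ℝ V, B 0 = v := by
  have hsingle : Orthonormal ℝ (({0} : Set (Fin (d + 1))).domRestrict fun _ => v) :=
    ⟨fun _ => hv, fun i j hij => (hij (Subsingleton.elim i j)).elim⟩
  obtain ⟨B, hB⟩ := hsingle.exists_orthonormalBasis_extension_of_card_eq (by simpa using hV)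
  exact ⟨B, hB 0 rfl⟩

lemma exists_linearIsometryEquiv_apply_eq (h : finrank ℝ V = finrank ℝ V') {v : V} {v' : V'}
    (hv : ‖v‖ = 1) (hv' : ‖v'‖ = 1) : ∃ Φ : V ≃ₗᵢ[ℝ] V', Φ v = v' := by
  have : Nontrivial V := nontrivial_of_ne v 0 (by simp [← norm_ne_zero_iff, hv])
  obtain ⟨d, hd⟩ := Nat.exists_eq_succ_of_ne_zero (finrank_pos (R := ℝ) (M := V)).ne'
  obtain ⟨B, hB⟩ := exists_orthonormalBasis_apply_zero hd hv
  obtain ⟨B', hB'⟩ := exists_orthonormalBasis_apply_zero (h ▸ hd) hv'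
  exact ⟨B.repr.trans B'.repr.symm, by simp [← hB, ← hB']⟩

end Isometry

lemma volume_slab_shell_le {E : Type*} [NormedAddCommGroup E] [InnerProductSpace ℝ E]
    [FiniteDimensional ℝ E] [MeasurableSpace E] [BorelSpace E]
    (hE : 3 ≤ finrank ℝ E) {a : E} (ha : a ≠ 0) (c : E) (s : ℝ) :
    ∃ C, ∀ δ ε, 0 < ε → ε ≤ 1 →
      volume {ξ | |⟪a, ξ⟫| < δ ∧ |‖ξ - c‖ ^ 2 - s| < ε} ≤ ENNReal.ofReal (C * δ * ε) := by
  let F := EuclideanSpace ℝ (Fin (finrank ℝ E - 1))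
  have hF : finrank ℝ F = finrank ℝ E - 1 := finrank_euclideanSpace_fin
  have hEW : finrank ℝ E = finrank ℝ (WithLp 2 (ℝ × F)) := by
    rw [(WithLp.linearEquiv 2 ℝ (ℝ × F)).finrank_eq, finrank_prod, finrank_self, hF]
    omega
  have hna : 0 < ‖a‖ := norm_pos_iff.2 ha
  obtain ⟨Φ, hΦ⟩ := exists_linearIsometryEquiv_apply_eq hEW (v := ‖a‖⁻¹ • a)
    (v' := WithLp.toLp 2 ((1 : ℝ), (0 : F))) (by simp [norm_smul, hna.ne']) (by simp)
  let P : E ≃ᵐ ℝ × F := Φ.toMeasurableEquiv.trans (MeasurableEquiv.toLp 2 (ℝ × F)).symm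
  have hP : MeasurePreserving P :=
    (WithLp.volume_preserving_symm_measurableEquiv_toLp_prod ℝ F).comp Φ.measurePreserving
  have hΦa : Φ a = ‖a‖ • WithLp.toLp 2 ((1 : ℝ), (0 : F)) := by
    rw [← hΦ, map_smul, smul_inv_smul₀ hna.ne']
  have hinner (ξ : E) : ⟪a, ξ⟫ = ‖a‖ * (P ξ).1 := by
    rw [← Φ.inner_map_map, hΦa, real_inner_smul_left, WithLp.prod_inner_apply]
    simp [P]
  have hnorm (ξ : E) : ‖ξ - c‖ ^ 2 = ((P ξ).1 - (P c).1) ^ 2 + ‖(P ξ).2 - (P c).2‖ ^ 2 := by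
    rw [← Φ.norm_map, map_sub, WithLp.prod_norm_sq_eq_of_L2]
    simp [P]
  refine ⟨4 * (finrank ℝ F * √(s + 1) ^ (finrank ℝ F - 2) * (volume (ball (0 : F) 1)).toReal)
    / ‖a‖, fun δ ε hε hε1 => ?_⟩
  have hpre : {ξ | |⟪a, ξ⟫| < δ ∧ |‖ξ - c‖ ^ 2 - s| < ε} = P ⁻¹'
      {p : ℝ × F | |p.1| < δ / ‖a‖ ∧ |(p.1 - (P c).1) ^ 2 + ‖p.2 - (P c).2‖ ^ 2 - s| < ε} := by
    ext ξ
    simp only [mem_ofPred_eq, mem_preimage, hinner, hnorm, abs_mul, abs_norm,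
      lt_div_iff₀ hna, mul_comm ‖a‖]
  rw [hpre, hP.measure_preimage_equiv]
  refine (volume_prod_slab_shell_le volume (by omega) _ _ (R := s + 1) (by linarith)).trans_eq ?_
  conv_lhs => rw [← ENNReal.ofReal_toReal (measure_ball_lt_top (μ := (volume : Measure F))).ne]
  rw [← ENNReal.ofReal_mul (by positivity), ← ENNReal.ofReal_mul' (by positivity)]
  congr 1
  field_simp
  ring

theorem integrableOn_inv_of_measure_norm_lt_le {α 𝕜 : Type*} [MeasurableSpace α]
    [NormedDivisionRing 𝕜] [MeasurableSpace 𝕜] [BorelSpace 𝕜] [SecondCountableTopology 𝕜]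
    {μ : Measure α} {f : α → 𝕜} (hf : Measurable f) {K : Set α} (hK : μ K ≠ ⊤) {C p : ℝ}
    (hp : 1 < p) (hsmall : ∀ t, 0 < t → t ≤ 1 → μ {x | ‖f x‖ < t} ≤ ENNReal.ofReal (C * t ^ p)) :
    IntegrableOn (fun x => (f x)⁻¹) K μ := by
  refine ⟨hf.inv.aestronglyMeasurable, ?_⟩
  rw [hasFiniteIntegral_iff_norm, lintegral_eq_lintegral_meas_lt _ (f := fun x => ‖(f x)⁻¹‖)
    (ae_of_all _ fun _ => norm_nonneg _) hf.inv.norm.aemeasurable,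
    ← Ioc_union_Ioi_eq_Ioi zero_le_one]
  refine (lintegral_union_le _ _ _).trans_lt (ENNReal.add_lt_top.2 ⟨?_, ?_⟩)
  · calc ∫⁻ t in Ioc 0 1, μ.restrict K {x | t < ‖(f x)⁻¹‖}
        ≤ ∫⁻ t in Ioc 0 1, μ K := lintegral_mono fun t =>
          (measure_mono (subset_univ _)).trans_eq (Measure.restrict_apply_univ K)
      _ < ⊤ := by
          rw [setLIntegral_const, Real.volume_Ioc]
          exact ENNReal.mul_lt_top hK.lt_top ENNReal.ofReal_lt_top
  · have htail : ∀ t ∈ Ioi (1 : ℝ),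
        μ.restrict K {x | t < ‖(f x)⁻¹‖} ≤ ENNReal.ofReal (C * t ^ (-p)) := by
      intro t (ht : 1 < t)
      have ht0 : 0 < t := one_pos.trans ht
      have hsub : {x | t < ‖(f x)⁻¹‖} ⊆ {x | ‖f x‖ < t⁻¹} := fun x (hx : t < ‖(f x)⁻¹‖) => by
        rcases (norm_nonneg (f x)).eq_or_lt with h0 | hpos
        · simpa [← h0] using ht0
        · rw [norm_inv] at hx
          exact (lt_inv_comm₀ ht0 hpos).1 hx
      calc μ.restrict K {x | t < ‖(f x)⁻¹‖} ≤ μ {x | ‖f x‖ < t⁻¹} :=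
            (Measure.restrict_le_self _).trans (measure_mono hsub)
        _ ≤ ENNReal.ofReal (C * t⁻¹ ^ p) :=
            hsmall _ (inv_pos.2 ht0) (inv_le_one_of_one_le₀ ht.le)
        _ = ENNReal.ofReal (C * t ^ (-p)) := by rw [Real.inv_rpow ht0.le, Real.rpow_neg ht0.le]
    calc ∫⁻ t in Ioi 1, μ.restrict K {x | t < ‖(f x)⁻¹‖}
        ≤ ∫⁻ t in Ioi 1, ENNReal.ofReal (C * t ^ (-p)) := setLIntegral_mono' measurableSet_Ioi htail
      _ < ⊤ := ((integrableOn_Ioi_rpow_of_lt (by linarith) one_pos).const_mul C).lintegral_lt_top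

namespace EuclideanSpace

variable {ι : Type*} [Fintype ι]

def re (ρ : EuclideanSpace ℂ ι) : EuclideanSpace ℝ ι := WithLp.toLp 2 fun j => (ρ j).re

def im (ρ : EuclideanSpace ℂ ι) : EuclideanSpace ℝ ι := WithLp.toLp 2 fun j => (ρ j).im

lemma sum_mul_ofReal (ρ : EuclideanSpace ℂ ι) (ξ : EuclideanSpace ℝ ι) :
    ∑ j, ρ j * (ξ j : ℂ) = ⟪ρ.re, ξ⟫ + ⟪ρ.im, ξ⟫ * I := by
  apply Complex.ext <;> simp [Complex.re_sum, Complex.im_sum, PiLp.inner_apply, re, im, mul_comm]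

end EuclideanSpace

section Multiplier

open EuclideanSpace

variable {ι : Type*} [Fintype ι]

noncomputable def multiplier (ρ : EuclideanSpace ℂ ι) (ξ : EuclideanSpace ℝ ι) : ℂ :=
  -(‖ξ‖ ^ 2 : ℝ) + 2 * Complex.I * ∑ j, ρ j * (ξ j : ℂ)

lemma continuous_multiplier (ρ : EuclideanSpace ℂ ι) : Continuous (multiplier ρ) := by
  unfold multiplier
  fun_prop

lemma multiplier_re (ρ : EuclideanSpace ℂ ι) (ξ : EuclideanSpace ℝ ι) :
    (multiplier ρ ξ).re = ‖ρ.im‖ ^ 2 - ‖ξ - -ρ.im‖ ^ 2 := by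
  rw [multiplier, sum_mul_ofReal, sub_neg_eq_add, norm_add_sq_real, real_inner_comm ρ.im ξ]
  simp [-ofReal_pow]
  ring

lemma multiplier_im (ρ : EuclideanSpace ℂ ι) (ξ : EuclideanSpace ℝ ι) :
    (multiplier ρ ξ).im = 2 * ⟪ρ.re, ξ⟫ := by
  simp [multiplier, sum_mul_ofReal, -ofReal_pow]

lemma setOf_norm_multiplier_lt_subset (ρ : EuclideanSpace ℂ ι) (t : ℝ) :
    {ξ | ‖multiplier ρ ξ‖ < t} ⊆
      {ξ | |⟪ρ.re, ξ⟫| < t / 2 ∧ |‖ξ - -ρ.im‖ ^ 2 - ‖ρ.im‖ ^ 2| < t} := by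
  intro ξ (hξ : ‖multiplier ρ ξ‖ < t)
  have him := (abs_im_le_norm _).trans_lt hξ
  have hre := (abs_re_le_norm _).trans_lt hξ
  rw [multiplier_im, abs_mul, abs_two] at him
  rw [multiplier_re, abs_sub_comm] at hre
  exact ⟨by linarith, hre⟩

end Multiplier

/-- For `n ≥ 3` and `ρ ∈ ℂⁿ` with `Re ρ ≠ 0`, the reciprocal of the Fourier
multiplier `m_ρ(ξ) = -|ξ|² + 2iρ·ξ` is integrable on every compact subset of `ℝⁿ`. -/
theorem statement3 (n : ℕ) (hn : 3 ≤ n) (ρ : EuclideanSpace ℂ (Fin n))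
    (hRe : ¬ (∀ j, (ρ j).re = 0)) :
    ∀ K : Set (EuclideanSpace ℝ (Fin n)), IsCompact K →
      IntegrableOn (fun ξ : EuclideanSpace ℝ (Fin n) =>
        (-(‖ξ‖ ^ 2 : ℝ) + 2 * Complex.I * ∑ j, ρ j * (ξ j : ℂ))⁻¹) K := by
  intro K hK
  have hre : ρ.re ≠ 0 := fun h => hRe fun j => by
    simpa [EuclideanSpace.re] using congrArg (· j) h
  obtain ⟨C, hC⟩ := volume_slab_shell_le (by simpa using hn) hre (-ρ.im) (‖ρ.im‖ ^ 2)
  refine integrableOn_inv_of_measure_norm_lt_le (continuous_multiplier ρ).measurable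
    hK.measure_lt_top.ne one_lt_two (C := C / 2) fun t ht0 ht1 => ?_
  calc volume {ξ | ‖multiplier ρ ξ‖ < t}
      ≤ volume {ξ | |⟪ρ.re, ξ⟫| < t / 2 ∧ |‖ξ - -ρ.im‖ ^ 2 - ‖ρ.im‖ ^ 2| < t} :=
        measure_mono (setOf_norm_multiplier_lt_subset ρ t)
    _ ≤ ENNReal.ofReal (C * (t / 2) * t) := hC _ _ ht0 ht1
    _ = ENNReal.ofReal (C / 2 * t ^ (2 : ℝ)) := by
        rw [Real.rpow_two]
        congr 1
        ring
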